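/- Let q ≥ 2 be a real number, 0 < δ < 1, r ≥ 2 an integer, and let p = (p_1, p_2, …) be a real sequence with |p_n| < δ^n/q^n for all n ≥ 1. Then |∂_r c_1^{(q)}(p)| < ( q^{r−1} / ( r (q − 1)(1 − q^{−r}) ) ) · (1 − δ²/q)/(1 − δ). -/

import Mathlib

/-- `s_1(q) = q + 1` and `s_n(q) = ∑_{d ∣ n} μ(n/d) q^d` for `n ≠ 1`.
(For `n = 0` the sum over divisors is empty, so `sFun q 0 = 0`.) -/
noncomputable def sFun (q : ℝ) (n : ℕ) : ℝ :=
  if n = 1 then q + 1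
  else ∑ d ∈ n.divisors, (ArithmeticFunction.moebius (n / d) : ℝ) * q ^ d

/-- `M_n(q) = (1/n) ∑_{d ∣ n} μ(n/d) q^d`; so `M_1(q) = q` and `M_n(q) = s_n(q)/n` for `n ≥ 2`. -/
noncomputable def MFun (q : ℝ) (n : ℕ) : ℝ :=
  (1 / (n : ℝ)) * ∑ d ∈ n.divisors, (ArithmeticFunction.moebius (n / d) : ℝ) * q ^ d

/-- `H_q(p) = ∏_{n ≥ 1} (1 + p_n)^{M_n(q)}`, a product of real powers (`Real.rpow`).
The `n = 0` factor is `(1 + p 0) ^ (0 : ℝ) = 1`, so the product effectively runs over `n ≥ 1`. -/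
noncomputable def Hfun (q : ℝ) (p : ℕ → ℝ) : ℝ :=
  ∏' n : ℕ, (1 + p n) ^ (MFun q n)

/-- `c_1^{(q)}(p) = q·p_1/(q − 1) − (H_q(p) − 1)/(q(q − 1))`. -/
noncomputable def c1Fun (q : ℝ) (p : ℕ → ℝ) : ℝ :=
  q * p 1 / (q - 1) - (Hfun q p - 1) / (q * (q - 1))

/-!
Writing `H_q(p) = exp (∑ₙ M_n(q) log (1 + p_n))`, varying `p_r` only changes the `r`-th term, so
`∂_r c_1 = -M_r(q) H_q(p) / ((1 + p_r) q (q - 1))`. The three factors are bounded separately: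
`r M_r(q) < q^r` because `∑_{d ∣ r} d M_d(q) = q^r` with all `M_d(q) ≥ 0`; `1 + p_r > 1 - q^{-r}`;
and, by monotonicity of `log`, `log H_q(p) ≤ ∑ₙ M_n(q) log (1 + tⁿ)` with `t = δ/q`, which the
cyclotomic identity `∑ₙ M_n(q) (-log (1 - tⁿ)) = -log (1 - q t)`, used at `t` and `t²`, evaluates
to `log ((1 - q t²)/(1 - q t)) = log ((1 - δ²/q)/(1 - δ))`.
-/

open Real Function Finset

lemma MFun_zero (q : ℝ) : MFun q 0 = 0 := by simp [MFun]

lemma MFun_one (q : ℝ) : MFun q 1 = q := by simp [MFun]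

lemma sum_divisors_mul_MFun (q : ℝ) {n : ℕ} (hn : 0 < n) :
    ∑ d ∈ n.divisors, (d : ℝ) * MFun q d = q ^ n := by
  refine (ArithmeticFunction.sum_eq_iff_sum_mul_moebius_eq
    (f := fun d : ℕ => (d : ℝ) * MFun q d) (g := (q ^ ·))).mpr (fun m hm => ?_) n hn
  rw [Nat.sum_divisorsAntidiagonal'
      (f := fun x y => ((ArithmeticFunction.moebius x : ℤ) : ℝ) * q ^ y), MFun, ← mul_assoc,
    mul_one_div_cancel (by positivity), one_mul]

lemma sum_properDivisors_pow_lt {q : ℝ} (hq : 2 ≤ q) (n : ℕ) :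
    ∑ d ∈ n.properDivisors, q ^ d < q ^ n := by
  have hsub : n.properDivisors ⊆ range n := fun d hd =>
    mem_range.mpr (Nat.mem_properDivisors.mp hd).2
  calc ∑ d ∈ n.properDivisors, q ^ d
      ≤ ∑ d ∈ range n, q ^ d := sum_le_sum_of_subset_of_nonneg hsub (fun _ _ _ => by positivity)
    _ = (q ^ n - 1) / (q - 1) := geom_sum_eq (by linarith) n
    _ ≤ q ^ n - 1 := div_le_self (by linarith [one_le_pow₀ (n := n) (by linarith : 1 ≤ q)])
        (by linarith)
    _ < q ^ n := by linarith

lemma MFun_nonneg {q : ℝ} (hq : 2 ≤ q) (n : ℕ) : 0 ≤ MFun q n := by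
  rcases Nat.eq_zero_or_pos n with rfl | hn
  · rw [MFun_zero]
  -- the term `d = n` of the Möbius sum dominates all the others
  have hsum : 0 ≤ ∑ d ∈ n.divisors, (ArithmeticFunction.moebius (n / d) : ℝ) * q ^ d := by
    rw [← Nat.cons_self_properDivisors hn.ne', sum_cons, Nat.div_self hn,
      ArithmeticFunction.moebius_apply_one, Int.cast_one, one_mul]
    have hterm : ∀ d ∈ n.properDivisors,
        -q ^ d ≤ (ArithmeticFunction.moebius (n / d) : ℝ) * q ^ d := fun d _ => by
      have hμ : |(ArithmeticFunction.moebius (n / d) : ℝ)| ≤ 1 := by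
        exact_mod_cast ArithmeticFunction.abs_moebius_le_one
      nlinarith [abs_le.mp hμ, pow_pos (by linarith : (0 : ℝ) < q) d]
    have := sum_le_sum hterm
    rw [sum_neg_distrib] at this
    linarith [sum_properDivisors_pow_lt hq n]
  exact mul_nonneg (by positivity) hsum

lemma MFun_lt_pow_div {q : ℝ} (hq : 2 ≤ q) {r : ℕ} (hr : 2 ≤ r) : MFun q r < q ^ r / r := by
  have h := Finset.add_le_sum (f := fun d : ℕ => (d : ℝ) * MFun q d)
    (fun d _ => mul_nonneg d.cast_nonneg (MFun_nonneg hq d))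
    (Nat.mem_divisors_self r (by omega)) (Nat.one_mem_divisors.mpr (by omega)) (by omega)
  rw [sum_divisors_mul_MFun q (by omega)] at h
  simp only [Nat.cast_one, one_mul, MFun_one] at h
  rw [lt_div_iff₀ (by positivity)]
  linarith

lemma hasSum_pnat_pow_div_log_of_abs_lt_one {x : ℝ} (hx : |x| < 1) :
    HasSum (fun k : ℕ+ => x ^ (k : ℕ) / k) (-log (1 - x)) := by
  refine hasSum_pnat_iff_hasSum_succ (f := fun k : ℕ => x ^ k / k).mpr ?_
  simpa [Nat.cast_add, Nat.cast_one] using Real.hasSum_pow_div_log_of_abs_lt_one hx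

lemma sum_divisorsAntidiagonal_MFun_mul_pow_div (q t : ℝ) {m : ℕ} (hm : 0 < m) :
    ∑ x ∈ m.divisorsAntidiagonal, MFun q x.1 * t ^ (x.1 * x.2) / x.2 = (q * t) ^ m / m := by
  have hterm : ∀ x ∈ m.divisorsAntidiagonal,
      MFun q x.1 * t ^ (x.1 * x.2) / x.2 = x.1 * MFun q x.1 * (t ^ m / m) := by
    rintro ⟨a, b⟩ hab
    obtain ⟨hab, -⟩ := Nat.mem_divisorsAntidiagonal.mp hab
    have ha : a ≠ 0 := left_ne_zero_of_mul (hab ▸ hm.ne')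
    rw [← hab, Nat.cast_mul]
    field_simp
  rw [sum_congr rfl hterm, ← sum_mul, Nat.sum_divisorsAntidiagonal (fun a _ => a * MFun q a),
    sum_divisors_mul_MFun q hm, mul_pow, mul_div_assoc]

lemma hasSum_MFun_mul_neg_log_one_sub {q t : ℝ} (hq : 2 ≤ q) (ht : 0 ≤ t) (hqt : q * t < 1) :
    HasSum (fun n : ℕ => MFun q n * -log (1 - t ^ n)) (-log (1 - q * t)) := by
  -- expand each logarithm and regroup the double series by `m = n k`
  set F : ℕ+ × ℕ+ → ℝ := fun c => MFun q c.1 * t ^ (c.1 * c.2 : ℕ) / c.2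
  have hF : ∀ c, 0 ≤ F c := fun c => by have := MFun_nonneg hq c.1; positivity
  have hfiber : ∀ m : ℕ+, HasSum (fun x => F (sigmaAntidiagonalEquivProd ⟨m, x⟩))
      ((q * t) ^ (m : ℕ) / m) := fun m => by
    have := hasSum_fintype
      (fun x : (m : ℕ).divisorsAntidiagonal => MFun q x.1.1 * t ^ (x.1.1 * x.1.2) / x.1.2)
    rw [Finset.sum_coe_sort (m : ℕ).divisorsAntidiagonal
      (fun x => MFun q x.1 * t ^ (x.1 * x.2) / x.2),
      sum_divisorsAntidiagonal_MFun_mul_pow_div q t m.pos] at this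
    exact this
  have hlog : HasSum (fun m : ℕ+ => (q * t) ^ (m : ℕ) / m) (-log (1 - q * t)) :=
    hasSum_pnat_pow_div_log_of_abs_lt_one (by rw [abs_of_nonneg (by positivity)]; exact hqt)
  have hsigma : HasSum (F ∘ sigmaAntidiagonalEquivProd) (-log (1 - q * t)) :=
    hlog.sigma_of_hasSum hfiber <| (summable_sigma_of_nonneg (fun _ => hF _)).mpr
      ⟨fun m => (hfiber m).summable,
        by simpa only [fun m => (hfiber m).tsum_eq] using hlog.summable⟩
  have hrow : ∀ n : ℕ+, HasSum (fun k => F (n, k)) (MFun q n * -log (1 - t ^ (n : ℕ))) := by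
    intro n
    have htn : |t ^ (n : ℕ)| < 1 := by
      rw [abs_of_nonneg (by positivity)]
      exact pow_lt_one₀ ht (by nlinarith) n.ne_zero
    simpa only [F, pow_mul, mul_div_assoc] using
      (hasSum_pnat_pow_div_log_of_abs_lt_one htn).mul_left (MFun q n)
  have := (sigmaAntidiagonalEquivProd.hasSum_iff.mp hsigma).prod_fiberwise hrow
  have h2 := (hasSum_pnat_iff (f := fun n : ℕ => MFun q n * -log (1 - t ^ n))).mp this
  rwa [MFun_zero, zero_mul, add_zero] at h2

lemma hasSum_MFun_mul_log_one_add {q t : ℝ} (hq : 2 ≤ q) (ht : 0 ≤ t) (hqt : q * t < 1) :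
    HasSum (fun n : ℕ => MFun q n * log (1 + t ^ n)) (log (1 - q * t ^ 2) - log (1 - q * t)) := by
  have ht1 : t < 1 := by nlinarith
  have hqt2 : q * t ^ 2 < 1 := by nlinarith
  have hsplit : (fun n : ℕ => MFun q n * log (1 + t ^ n))
      = fun n => MFun q n * -log (1 - t ^ n) - MFun q n * -log (1 - (t ^ 2) ^ n) := by
    funext n
    rcases Nat.eq_zero_or_pos n with rfl | hn
    · simp [MFun_zero]
    have htn : t ^ n < 1 := pow_lt_one₀ ht ht1 hn.ne'
    rw [← pow_mul, mul_comm 2 n, pow_mul, show 1 - (t ^ n) ^ 2 = (1 - t ^ n) * (1 + t ^ n) by ring,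
      log_mul (by linarith) (by linarith [pow_nonneg ht n])]
    ring
  rw [hsplit, sub_eq_neg_add, ← neg_neg (log (1 - q * t ^ 2)), ← sub_eq_add_neg]
  exact (hasSum_MFun_mul_neg_log_one_sub hq ht hqt).sub
    (hasSum_MFun_mul_neg_log_one_sub hq (sq_nonneg t) hqt2)

lemma MFun_mul_log_one_add_mem_Icc {q ε : ℝ} (hq : 2 ≤ q) (hε : 0 ≤ ε) (hε1 : ε < 1)
    {p : ℕ → ℝ} (hp : ∀ n, 1 ≤ n → |p n| ≤ ε ^ n) (n : ℕ) :
    MFun q n * log (1 + p n) ∈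
      Set.Icc (MFun q n * log (1 - ε ^ n)) (MFun q n * log (1 + ε ^ n)) := by
  rcases Nat.eq_zero_or_pos n with rfl | hn
  · simp [MFun_zero]
  have hεn : ε ^ n < 1 := pow_lt_one₀ hε hε1 hn.ne'
  obtain ⟨hlo, hhi⟩ := abs_le.mp (hp n hn)
  exact ⟨mul_le_mul_of_nonneg_left (log_le_log (by linarith) (by linarith)) (MFun_nonneg hq n),
    mul_le_mul_of_nonneg_left (log_le_log (by linarith) (by linarith)) (MFun_nonneg hq n)⟩

lemma summable_MFun_mul_log_one_add {q ε : ℝ} (hq : 2 ≤ q) (hε : 0 ≤ ε) (hqε : q * ε < 1)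
    {p : ℕ → ℝ} (hp : ∀ n, 1 ≤ n → |p n| ≤ ε ^ n) :
    Summable (fun n => MFun q n * log (1 + p n)) := by
  have hbounds := MFun_mul_log_one_add_mem_Icc hq hε (by nlinarith) hp
  have hlower : Summable (fun n => MFun q n * log (1 - ε ^ n)) := by
    simpa [mul_neg] using (hasSum_MFun_mul_neg_log_one_sub hq hε hqε).summable.neg
  have hdiff : Summable (fun n => MFun q n * log (1 + p n) - MFun q n * log (1 - ε ^ n)) :=
    Summable.of_nonneg_of_le (fun n => sub_nonneg.mpr (hbounds n).1)
      (fun n => sub_le_sub_right (hbounds n).2 _)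
      ((hasSum_MFun_mul_log_one_add hq hε hqε).summable.sub hlower)
  simpa using hdiff.add hlower

lemma tsum_MFun_mul_log_one_add_le {q ε : ℝ} (hq : 2 ≤ q) (hε : 0 ≤ ε) (hqε : q * ε < 1)
    {p : ℕ → ℝ} (hp : ∀ n, 1 ≤ n → |p n| ≤ ε ^ n) :
    ∑' n, MFun q n * log (1 + p n) ≤ log (1 - q * ε ^ 2) - log (1 - q * ε) :=
  hasSum_le (fun n => (MFun_mul_log_one_add_mem_Icc hq hε (by nlinarith) hp n).2)
    (summable_MFun_mul_log_one_add hq hε hqε hp).hasSum (hasSum_MFun_mul_log_one_add hq hε hqε)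

lemma Hfun_eq_exp_tsum {q : ℝ} {p : ℕ → ℝ} (hp : ∀ n, 1 ≤ n → 0 < 1 + p n)
    (hs : Summable (fun n => MFun q n * log (1 + p n))) :
    Hfun q p = exp (∑' n, MFun q n * log (1 + p n)) := by
  refine HasProd.tprod_eq ?_
  convert hs.hasSum.rexp using 1
  funext n
  rcases Nat.eq_zero_or_pos n with rfl | hn
  · simp [MFun_zero]
  · rw [comp_apply, rpow_def_of_pos (hp n hn), mul_comm]

lemma Hfun_eq_exp_tsum_of_abs_le {q ε : ℝ} (hq : 2 ≤ q) (hε : 0 ≤ ε) (hqε : q * ε < 1)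
    {p : ℕ → ℝ} (hp : ∀ n, 1 ≤ n → |p n| ≤ ε ^ n) :
    Hfun q p = exp (∑' n, MFun q n * log (1 + p n)) := by
  refine Hfun_eq_exp_tsum (fun n hn => ?_) (summable_MFun_mul_log_one_add hq hε hqε hp)
  have hεn : ε ^ n < 1 := pow_lt_one₀ hε (by nlinarith) (by omega)
  linarith [(abs_le.mp (hp n hn)).1]

lemma Hfun_pos {q ε : ℝ} (hq : 2 ≤ q) (hε : 0 ≤ ε) (hqε : q * ε < 1)
    {p : ℕ → ℝ} (hp : ∀ n, 1 ≤ n → |p n| ≤ ε ^ n) : 0 < Hfun q p := by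
  rw [Hfun_eq_exp_tsum_of_abs_le hq hε hqε hp]
  exact exp_pos _

lemma Hfun_le {q ε : ℝ} (hq : 2 ≤ q) (hε : 0 ≤ ε) (hqε : q * ε < 1)
    {p : ℕ → ℝ} (hp : ∀ n, 1 ≤ n → |p n| ≤ ε ^ n) :
    Hfun q p ≤ (1 - q * ε ^ 2) / (1 - q * ε) := by
  have hqε2 : 0 < 1 - q * ε ^ 2 := by nlinarith
  rw [Hfun_eq_exp_tsum_of_abs_le hq hε hqε hp, ← exp_log (div_pos hqε2 (by linarith)),
    log_div hqε2.ne' (by linarith)]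
  exact exp_le_exp.mpr (tsum_MFun_mul_log_one_add_le hq hε hqε hp)

lemma Hfun_update_eq {q ε : ℝ} (hq : 2 ≤ q) (hε : 0 ≤ ε) (hqε : q * ε < 1)
    {p : ℕ → ℝ} (hp : ∀ n, 1 ≤ n → |p n| ≤ ε ^ n) {r : ℕ} (hr : 1 ≤ r) {t : ℝ}
    (ht : |t| ≤ ε ^ r) :
    Hfun q (update p r t) = Hfun q p * exp (MFun q r * (log (1 + t) - log (1 + p r))) := by
  have hpt : ∀ n, 1 ≤ n → |update p r t n| ≤ ε ^ n := fun n hn => by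
    rcases eq_or_ne n r with rfl | hne
    · rwa [update_self]
    · rw [update_of_ne hne]; exact hp n hn
  have hterms : (fun n => MFun q n * log (1 + update p r t n))
      = update (fun n => MFun q n * log (1 + p n)) r (MFun q r * log (1 + t)) := by
    funext n
    rcases eq_or_ne n r with rfl | hne
    · simp
    · simp [hne]
  rw [Hfun_eq_exp_tsum_of_abs_le hq hε hqε hpt, Hfun_eq_exp_tsum_of_abs_le hq hε hqε hp, ← exp_add,
    hterms, ((summable_MFun_mul_log_one_add hq hε hqε hp).hasSum.update r _).tsum_eq]
  ring_nf

lemma hasDerivAt_Hfun_update {q ε : ℝ} (hq : 2 ≤ q) (hε : 0 ≤ ε) (hqε : q * ε < 1)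
    {p : ℕ → ℝ} (hp : ∀ n, 1 ≤ n → |p n| ≤ ε ^ n) {r : ℕ} (hr : 1 ≤ r) (hpr : |p r| < ε ^ r) :
    HasDerivAt (fun t => Hfun q (update p r t)) (Hfun q p * (MFun q r / (1 + p r))) (p r) := by
  have hpr1 : 0 < 1 + p r := by
    linarith [(abs_lt.mp hpr).1, pow_le_one₀ hε (by nlinarith : ε ≤ 1) (n := r)]
  have hmodel := (((((hasDerivAt_id (p r)).const_add 1).log hpr1.ne').sub_const
    (log (1 + p r))).const_mul (MFun q r)).exp.const_mul (Hfun q p)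
  simp only [id, sub_self, mul_zero, exp_zero, one_mul, mul_one_div] at hmodel
  refine hmodel.congr_of_eventuallyEq ?_
  filter_upwards [(isOpen_lt continuous_abs continuous_const).mem_nhds hpr] with t ht
  exact Hfun_update_eq hq hε hqε hp hr (le_of_lt ht)

lemma hasDerivAt_c1Fun_update {q ε : ℝ} (hq : 2 ≤ q) (hε : 0 ≤ ε) (hqε : q * ε < 1)
    {p : ℕ → ℝ} (hp : ∀ n, 1 ≤ n → |p n| ≤ ε ^ n) {r : ℕ} (hr : 1 < r) (hpr : |p r| < ε ^ r) :
    HasDerivAt (fun t => c1Fun q (update p r t))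
      (-(Hfun q p * (MFun q r / (1 + p r))) / (q * (q - 1))) (p r) := by
  have h := (((hasDerivAt_Hfun_update hq hε hqε hp hr.le hpr).sub_const 1).div_const
    (q * (q - 1))).const_sub (q * p 1 / (q - 1))
  simpa only [c1Fun, update_of_ne (by omega : 1 ≠ r), neg_div] using h

lemma one_sub_inv_pow_lt_one_add {q δ x : ℝ} (hq : 1 ≤ q) (hδ0 : 0 ≤ δ) (hδ1 : δ < 1) {r : ℕ}
    (hr : r ≠ 0) (hx : |x| < (δ / q) ^ r) : 1 - (q ^ r)⁻¹ < 1 + x := by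
  have : (δ / q) ^ r < (q ^ r)⁻¹ := by
    rw [div_pow, div_eq_mul_inv]
    exact mul_lt_of_lt_one_left (by positivity) (pow_lt_one₀ hδ0 hδ1 hr)
  linarith [(abs_lt.mp hx).1]

/-- For `q ≥ 2`, `0 < δ < 1`, an integer `r ≥ 2` and `|p_n| < δ^n/q^n` for all `n ≥ 1`,
the partial derivative `∂_r c_1^{(q)}(p)` exists and satisfies
`|∂_r c_1^{(q)}(p)| < (q^{r−1}/(r(q − 1)(1 − q^{−r}))) · (1 − δ²/q)/(1 − δ)`. -/
theorem abs_deriv_c1_higher_variable_lt (q δ : ℝ) (hq : 2 ≤ q) (hδ0 : 0 < δ) (hδ1 : δ < 1)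
    (r : ℕ) (hr : 2 ≤ r)
    (p : ℕ → ℝ) (hp : ∀ n : ℕ, 1 ≤ n → |p n| < δ ^ n / q ^ n) :
    ∃ D : ℝ,
      HasDerivAt (fun t : ℝ => c1Fun q (Function.update p r t)) D (p r) ∧
      |D| < (q ^ (r - 1) / ((r : ℝ) * (q - 1) * (1 - (q ^ r)⁻¹)))
              * ((1 - δ ^ 2 / q) / (1 - δ)) := by
  have hq0 : 0 < q := by linarith
  have hε : 0 ≤ δ / q := by positivity
  have hqε : q * (δ / q) < 1 := by rwa [mul_div_cancel₀ δ hq0.ne']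
  have hpε : ∀ n, 1 ≤ n → |p n| < (δ / q) ^ n := fun n hn => by rw [div_pow]; exact hp n hn
  have hpε' : ∀ n, 1 ≤ n → |p n| ≤ (δ / q) ^ n := fun n hn => (hpε n hn).le
  refine ⟨_, hasDerivAt_c1Fun_update hq hε hqε hpε' (by omega) (hpε r (by omega)), ?_⟩
  have hH := Hfun_pos hq hε hqε hpε'
  have hHle : Hfun q p ≤ (1 - δ ^ 2 / q) / (1 - δ) := by
    convert Hfun_le hq hε hqε hpε' using 2 <;> field_simp
  have hM := MFun_lt_pow_div hq hr
  have hpr :=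
    one_sub_inv_pow_lt_one_add (by linarith) hδ0.le hδ1 (by omega : r ≠ 0) (hpε r (by omega))
  have hqr : 0 < 1 - (q ^ r)⁻¹ :=
    sub_pos.mpr (inv_lt_one_of_one_lt₀ (one_lt_pow₀ (by linarith) (by omega : r ≠ 0)))
  have hpr1 : 0 < 1 + p r := hqr.trans hpr
  have hq1 : 0 < q * (q - 1) := by nlinarith
  rw [abs_div, abs_neg, abs_of_nonneg (by have := MFun_nonneg hq r; positivity), abs_of_pos hq1]
  calc Hfun q p * (MFun q r / (1 + p r)) / (q * (q - 1))
      < Hfun q p * (q ^ r / r / (1 - (q ^ r)⁻¹)) / (q * (q - 1)) := by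
        gcongr
    _ ≤ (1 - δ ^ 2 / q) / (1 - δ) * (q ^ r / r / (1 - (q ^ r)⁻¹)) / (q * (q - 1)) := by
        gcongr
    _ = _ := by
        rw [show q ^ r = q ^ (r - 1) * q by rw [← pow_succ, Nat.sub_add_cancel (by omega)]]
        field_simp
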